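/- For all natural numbers m, n and all u, v ∈ (0,1], T^{m+3+n}(u,v) ≥ (∫₀¹ T^m(u,u') exp(-β/(2u')) du') · c · (∫₀¹ exp(-β/(2v')) T^n(v',v) dv'), where c := ∫₀¹ exp(-(β+2γ)/w) dw. -/

import Mathlib

open Real

/-- The Coulomb transfer kernel. -/
noncomputable def Q (β γ x y : ℝ) : ℝ := exp (-β/(2*x) - β/(2*y) - γ/(x+y))

/-- The `r`-fold transfer integral of `Q`. -/
noncomputable def T (β γ : ℝ) : ℕ → ℝ → ℝ → ℝ
  | 0 => fun x y => Q β γ x y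
  | r + 1 => fun x y => ∫ u in (0:ℝ)..1, Q β γ x u * T β γ r u y

open MeasureTheory Set

section Aux
variable (β γ : ℝ)

lemma Q_meas : Measurable fun p : ℝ × ℝ => Q β γ p.1 p.2 := by unfold Q; fun_prop

lemma Q_pos (x y : ℝ) : 0 < Q β γ x y := exp_pos _

lemma Q_le_one (hβ : 0 ≤ β) (hγ : 0 ≤ γ) {x y : ℝ} (hx : 0 < x) (hy : 0 < y) :
    Q β γ x y ≤ 1 := by
  rw [Q, exp_le_one_iff, neg_div]
  have h1 : 0 ≤ β/(2*x) := by positivity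
  have h2 : 0 ≤ β/(2*y) := by positivity
  have h3 : 0 ≤ γ/(x+y) := by positivity
  linarith

lemma T_eq (r : ℕ) (x y : ℝ) :
    T β γ (r+1) x y = ∫ u in Ioc (0:ℝ) 1, Q β γ x u * T β γ r u y := by
  simp only [T]
  rw [intervalIntegral.integral_of_le zero_le_one]

lemma T_meas : ∀ r : ℕ, Measurable fun p : ℝ × ℝ => T β γ r p.1 p.2 := by
  intro r
  induction r with
  | zero => exact Q_meas β γ
  | succ r ih =>
    have hQ : Measurable fun q : (ℝ × ℝ) × ℝ => Q β γ q.1.1 q.2 := by unfold Q; fun_prop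
    have hT : Measurable fun q : (ℝ × ℝ) × ℝ => T β γ r q.2 q.1.2 :=
      ih.comp (measurable_snd.prodMk measurable_fst.snd)
    have hF := hQ.mul hT
    have := (hF.stronglyMeasurable.integral_prod_right'
      (ν := volume.restrict (Ioc (0:ℝ) 1))).measurable
    simpa only [T_eq, Pi.mul_apply] using this

lemma Q_meas_left (x : ℝ) : Measurable fun t => Q β γ x t := by unfold Q; fun_prop

lemma Q_meas_right (y : ℝ) : Measurable fun t => Q β γ t y := by unfold Q; fun_prop

lemma T_meas_left (r : ℕ) (x : ℝ) : Measurable fun t => T β γ r x t :=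
  (T_meas β γ r).comp (measurable_const.prodMk measurable_id)

lemma T_meas_right (r : ℕ) (y : ℝ) : Measurable fun t => T β γ r t y :=
  (T_meas β γ r).comp (measurable_id.prodMk measurable_const)

lemma intOn {f : ℝ → ℝ} (hm : Measurable f) (C : ℝ) (hb : ∀ x ∈ Ioc (0:ℝ) 1, |f x| ≤ C) :
    IntegrableOn f (Ioc (0:ℝ) 1) := by
  apply Integrable.mono' (integrable_const C) hm.aestronglyMeasurable
  filter_upwards [ae_restrict_mem measurableSet_Ioc] with x hx
  simpa [Real.norm_eq_abs] using hb x hx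

lemma T_nonneg : ∀ (r : ℕ) (x y : ℝ), 0 ≤ T β γ r x y := by
  intro r
  induction r with
  | zero => exact fun x y => (Q_pos β γ x y).le
  | succ r ih =>
    intro x y
    rw [T_eq]
    exact setIntegral_nonneg measurableSet_Ioc fun u _ =>
      mul_nonneg (Q_pos β γ x u).le (ih u y)

lemma setint_le_one {f : ℝ → ℝ} (hint : IntegrableOn f (Ioc (0:ℝ) 1))
    (h : ∀ x ∈ Ioc (0:ℝ) 1, f x ≤ 1) : ∫ x in Ioc (0:ℝ) 1, f x ≤ 1 := by
  calc ∫ x in Ioc (0:ℝ) 1, f x ≤ ∫ _x in Ioc (0:ℝ) 1, (1:ℝ) :=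
        setIntegral_mono_on hint (integrableOn_const (by simp) (by simp)) measurableSet_Ioc h
    _ = 1 := by simp

lemma T_le_one (hβ : 0 ≤ β) (hγ : 0 ≤ γ) :
    ∀ (r : ℕ) {x y : ℝ}, 0 < x → 0 < y → T β γ r x y ≤ 1 := by
  intro r
  induction r with
  | zero => exact fun hx hy => Q_le_one β γ hβ hγ hx hy
  | succ r ih =>
    intro x y hx hy
    rw [T_eq]
    apply setint_le_one
    · apply intOn ((Q_meas_left β γ x).mul (T_meas_right β γ r y)) 1
      intro t ht
      simp only [Pi.mul_apply]
      rw [abs_of_nonneg (mul_nonneg (Q_pos β γ x t).le (T_nonneg β γ r t y))]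
      calc Q β γ x t * T β γ r t y ≤ 1 * 1 :=
            mul_le_mul (Q_le_one β γ hβ hγ hx ht.1) (ih ht.1 hy)
              (T_nonneg β γ r t y) zero_le_one
        _ = 1 := by norm_num
    · intro t ht
      calc Q β γ x t * T β γ r t y ≤ 1 * 1 :=
            mul_le_mul (Q_le_one β γ hβ hγ hx ht.1) (ih ht.1 hy)
              (T_nonneg β γ r t y) zero_le_one
        _ = 1 := by norm_num

lemma exp_div_le_one {c t : ℝ} (hc : 0 ≤ c) (ht : 0 < t) : exp (-c/t) ≤ 1 := by
  rw [exp_le_one_iff, neg_div]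
  have : 0 ≤ c/t := div_nonneg hc ht.le
  linarith

lemma key (hβ : 0 ≤ β) (hγ : 0 ≤ γ) {a w b : ℝ} (ha : 0 < a) (hw : 0 < w) (hb : 0 < b) :
    exp (-β/(2*a)) * exp (-(β+2*γ)/w) * exp (-β/(2*b)) ≤ Q β γ a w * Q β γ w b := by
  rw [Q, Q, ← exp_add, ← exp_add, ← exp_add, exp_le_exp]
  have h1 : γ/(a+w) ≤ γ/w := by gcongr; linarith
  have h2 : γ/(w+b) ≤ γ/w := by gcongr; linarith
  have h3 : (β+2*γ)/w = β/(2*w)+β/(2*w)+γ/w+γ/w := by field_simp; ring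
  simp only [neg_div]
  linarith

lemma intQT (hβ : 0 ≤ β) (hγ : 0 ≤ γ) (r : ℕ) {w v : ℝ} (hw : 0 < w) (hv : 0 < v) :
    IntegrableOn (fun t => Q β γ w t * T β γ r t v) (Ioc (0:ℝ) 1) := by
  apply intOn ((Q_meas_left β γ w).mul (T_meas_right β γ r v)) 1
  intro t ht
  simp only [Pi.mul_apply]
  rw [abs_of_nonneg (mul_nonneg (Q_pos β γ w t).le (T_nonneg β γ r t v))]
  calc Q β γ w t * T β γ r t v ≤ 1 * 1 :=
        mul_le_mul (Q_le_one β γ hβ hγ hw ht.1) (T_le_one β γ hβ hγ r ht.1 hv)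
          (T_nonneg β γ r t v) zero_le_one
    _ = 1 := by norm_num

lemma Bint (hβ : 0 ≤ β) (hγ : 0 ≤ γ) (n : ℕ) {v : ℝ} (hv : 0 < v) :
    IntegrableOn (fun v' => exp (-β/(2*v')) * T β γ n v' v) (Ioc (0:ℝ) 1) := by
  apply intOn ((by fun_prop : Measurable fun v' : ℝ => exp (-β/(2*v'))).mul
    (T_meas_right β γ n v)) 1
  intro t ht
  simp only [Pi.mul_apply]
  rw [abs_of_nonneg (mul_nonneg (exp_pos _).le (T_nonneg β γ n t v))]
  calc exp (-β/(2*t)) * T β γ n t v ≤ 1 * 1 :=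
        mul_le_mul (exp_div_le_one hβ (by linarith [ht.1])) (T_le_one β γ hβ hγ n ht.1 hv)
          (T_nonneg β γ n t v) zero_le_one
    _ = 1 := by norm_num

lemma B_nonneg (n : ℕ) (v : ℝ) :
    0 ≤ ∫ v' in Ioc (0:ℝ) 1, exp (-β/(2*v')) * T β γ n v' v :=
  setIntegral_nonneg measurableSet_Ioc fun v' _ =>
    mul_nonneg (exp_pos _).le (T_nonneg β γ n v' v)

lemma B_le_one (hβ : 0 ≤ β) (hγ : 0 ≤ γ) (n : ℕ) {v : ℝ} (hv : 0 < v) :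
    (∫ v' in Ioc (0:ℝ) 1, exp (-β/(2*v')) * T β γ n v' v) ≤ 1 := by
  apply setint_le_one (Bint β γ hβ hγ n hv)
  intro t ht
  calc exp (-β/(2*t)) * T β γ n t v ≤ 1 * 1 :=
        mul_le_mul (exp_div_le_one hβ (by linarith [ht.1])) (T_le_one β γ hβ hγ n ht.1 hv)
          (T_nonneg β γ n t v) zero_le_one
    _ = 1 := by norm_num

lemma inner_step (hβ : 0 ≤ β) (hγ : 0 ≤ γ) (n : ℕ) {v a w : ℝ}
    (hv : v ∈ Ioc (0:ℝ) 1) (ha : a ∈ Ioc (0:ℝ) 1) (hw : w ∈ Ioc (0:ℝ) 1) :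
    exp (-β/(2*a)) * exp (-(β+2*γ)/w) *
      (∫ v' in Ioc (0:ℝ) 1, exp (-β/(2*v')) * T β γ n v' v)
    ≤ Q β γ a w * T β γ (n+1) w v := by
  rw [T_eq, ← integral_const_mul, ← integral_const_mul]
  apply setIntegral_mono_on ?_ ?_ measurableSet_Ioc ?_
  · exact Integrable.const_mul (Bint β γ hβ hγ n hv.1) _
  · exact Integrable.const_mul (intQT β γ hβ hγ n hw.1 hv.1) _
  · intro v' hv'
    have hk := key β γ hβ hγ ha.1 hw.1 hv'.1
    have ht := T_nonneg β γ n v' v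
    calc exp (-β/(2*a)) * exp (-(β+2*γ)/w) * (exp (-β/(2*v')) * T β γ n v' v)
        = exp (-β/(2*a)) * exp (-(β+2*γ)/w) * exp (-β/(2*v')) * T β γ n v' v := by ring
      _ ≤ Q β γ a w * Q β γ w v' * T β γ n v' v := mul_le_mul_of_nonneg_right hk ht
      _ = Q β γ a w * (Q β γ w v' * T β γ n v' v) := by ring

lemma step1 (hβ : 0 ≤ β) (hγ : 0 ≤ γ) (n : ℕ) {v a : ℝ}
    (hv : v ∈ Ioc (0:ℝ) 1) (ha : a ∈ Ioc (0:ℝ) 1) :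
    exp (-β/(2*a)) * (∫ w in Ioc (0:ℝ) 1, exp (-(β+2*γ)/w)) *
      (∫ v' in Ioc (0:ℝ) 1, exp (-β/(2*v')) * T β γ n v' v)
    ≤ T β γ (n+1+1) a v := by
  have hL : exp (-β/(2*a)) * (∫ w in Ioc (0:ℝ) 1, exp (-(β+2*γ)/w)) *
        (∫ v' in Ioc (0:ℝ) 1, exp (-β/(2*v')) * T β γ n v' v)
      = ∫ w in Ioc (0:ℝ) 1, exp (-β/(2*a)) * exp (-(β+2*γ)/w) *
        (∫ v' in Ioc (0:ℝ) 1, exp (-β/(2*v')) * T β γ n v' v) := by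
    rw [integral_mul_const, integral_const_mul]
  rw [T_eq, hL]
  apply setIntegral_mono_on ?_ ?_ measurableSet_Ioc ?_
  · refine intOn (by fun_prop) 1 ?_
    intro w hw
    have hB0 := B_nonneg β γ n v
    have hB1 := B_le_one β γ hβ hγ n hv.1
    have he1 : exp (-β/(2*a)) ≤ 1 := exp_div_le_one hβ (by linarith [ha.1])
    have he2 : exp (-(β+2*γ)/w) ≤ 1 := exp_div_le_one (by linarith) hw.1
    have hp1 := (exp_pos (-β/(2*a))).le
    have hp2 := (exp_pos (-(β+2*γ)/w)).le
    rw [abs_of_nonneg (mul_nonneg (mul_nonneg hp1 hp2) hB0)]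
    calc exp (-β/(2*a)) * exp (-(β+2*γ)/w) *
          (∫ v' in Ioc (0:ℝ) 1, exp (-β/(2*v')) * T β γ n v' v) ≤ 1 * 1 * 1 :=
          mul_le_mul (mul_le_mul he1 he2 hp2 zero_le_one) hB1 hB0 (by norm_num)
      _ = 1 := by norm_num
  · exact intQT β γ hβ hγ (n+1) ha.1 hv.1
  · exact fun w hw => inner_step β γ hβ hγ n hv ha hw

lemma intA (hβ : 0 ≤ β) (hγ : 0 ≤ γ) (m : ℕ) {x : ℝ} (hx : 0 < x) :
    IntegrableOn (fun u' => T β γ m x u' * exp (-β/(2*u'))) (Ioc (0:ℝ) 1) := by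
  apply intOn ((T_meas_left β γ m x).mul
    (by fun_prop : Measurable fun u' : ℝ => exp (-β/(2*u')))) 1
  intro t ht
  simp only [Pi.mul_apply]
  rw [abs_of_nonneg (mul_nonneg (T_nonneg β γ m x t) (exp_pos _).le)]
  calc T β γ m x t * exp (-β/(2*t)) ≤ 1 * 1 :=
        mul_le_mul (T_le_one β γ hβ hγ m hx ht.1) (exp_div_le_one hβ (by linarith [ht.1]))
          (exp_pos _).le zero_le_one
    _ = 1 := by norm_num

lemma A_nonneg (m : ℕ) (x : ℝ) :
    0 ≤ ∫ u' in Ioc (0:ℝ) 1, T β γ m x u' * exp (-β/(2*u')) :=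
  setIntegral_nonneg measurableSet_Ioc fun u' _ =>
    mul_nonneg (T_nonneg β γ m x u') (exp_pos _).le

lemma A_le_one (hβ : 0 ≤ β) (hγ : 0 ≤ γ) (m : ℕ) {x : ℝ} (hx : 0 < x) :
    (∫ u' in Ioc (0:ℝ) 1, T β γ m x u' * exp (-β/(2*u'))) ≤ 1 := by
  apply setint_le_one (intA β γ hβ hγ m hx)
  intro t ht
  calc T β γ m x t * exp (-β/(2*t)) ≤ 1 * 1 :=
        mul_le_mul (T_le_one β γ hβ hγ m hx ht.1) (exp_div_le_one hβ (by linarith [ht.1]))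
          (exp_pos _).le zero_le_one
    _ = 1 := by norm_num

lemma A_meas (m : ℕ) :
    Measurable fun x => ∫ u' in Ioc (0:ℝ) 1, T β γ m x u' * exp (-β/(2*u')) := by
  have hF : Measurable fun q : ℝ × ℝ => T β γ m q.1 q.2 * exp (-β/(2*q.2)) :=
    (T_meas β γ m).mul (by fun_prop)
  exact (hF.stronglyMeasurable.integral_prod_right'
    (ν := volume.restrict (Ioc (0:ℝ) 1))).measurable

lemma A_succ (hβ : 0 ≤ β) (hγ : 0 ≤ γ) (m : ℕ) {u : ℝ} (hu : 0 < u) :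
    (∫ u' in Ioc (0:ℝ) 1, T β γ (m+1) u u' * exp (-β/(2*u')))
    = ∫ x in Ioc (0:ℝ) 1, Q β γ u x *
        ∫ u' in Ioc (0:ℝ) 1, T β γ m x u' * exp (-β/(2*u')) := by
  have hmeas : Measurable fun q : ℝ × ℝ => Q β γ u q.2 * T β γ m q.2 q.1 * exp (-β/(2*q.1)) := by
    refine Measurable.mul (Measurable.mul ?_ ?_) ?_
    · exact (Q_meas_left β γ u).comp measurable_snd
    · exact (T_meas β γ m).comp (measurable_snd.prodMk measurable_fst)
    · fun_prop
  have hmem : ∀ᵐ q ∂((volume.restrict (Ioc (0:ℝ) 1)).prod (volume.restrict (Ioc (0:ℝ) 1))),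
      q ∈ (Ioc (0:ℝ) 1) ×ˢ (Ioc (0:ℝ) 1) := by
    rw [Measure.prod_restrict]
    exact ae_restrict_mem (measurableSet_Ioc.prod measurableSet_Ioc)
  have hint : Integrable
      (Function.uncurry fun u' x => Q β γ u x * T β γ m x u' * exp (-β/(2*u')))
      ((volume.restrict (Ioc (0:ℝ) 1)).prod (volume.restrict (Ioc (0:ℝ) 1))) := by
    have h1 : Function.uncurry (fun u' x => Q β γ u x * T β γ m x u' * exp (-β/(2*u')))
        = fun q : ℝ × ℝ => Q β γ u q.2 * T β γ m q.2 q.1 * exp (-β/(2*q.1)) := rfl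
    rw [h1]
    refine Integrable.mono' (integrable_const 1) hmeas.aestronglyMeasurable ?_
    filter_upwards [hmem] with q hq
    obtain ⟨hq1, hq2⟩ := hq
    have h2 := Q_le_one β γ hβ hγ hu hq2.1
    have h3 := T_le_one β γ hβ hγ m hq2.1 hq1.1
    have h4 := exp_div_le_one hβ (by linarith [hq1.1] : (0:ℝ) < 2*q.1)
    have h5 := (Q_pos β γ u q.2).le
    have h6 := T_nonneg β γ m q.2 q.1
    have h7 := (exp_pos (-β/(2*q.1))).le
    rw [Real.norm_eq_abs, abs_of_nonneg (by positivity)]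
    calc Q β γ u q.2 * T β γ m q.2 q.1 * exp (-β/(2*q.1)) ≤ 1 * 1 * 1 :=
          mul_le_mul (mul_le_mul h2 h3 h6 zero_le_one) h4 h7 (by norm_num)
      _ = 1 := by norm_num
  calc (∫ u' in Ioc (0:ℝ) 1, T β γ (m+1) u u' * exp (-β/(2*u')))
      = ∫ u' in Ioc (0:ℝ) 1, ∫ x in Ioc (0:ℝ) 1,
          Q β γ u x * T β γ m x u' * exp (-β/(2*u')) := by
        refine setIntegral_congr_fun measurableSet_Ioc fun u' _ => ?_
        rw [T_eq, ← integral_mul_const]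
    _ = ∫ x in Ioc (0:ℝ) 1, ∫ u' in Ioc (0:ℝ) 1,
          Q β γ u x * T β γ m x u' * exp (-β/(2*u')) := integral_integral_swap hint
    _ = ∫ x in Ioc (0:ℝ) 1, Q β γ u x *
          ∫ u' in Ioc (0:ℝ) 1, T β γ m x u' * exp (-β/(2*u')) := by
        refine setIntegral_congr_fun measurableSet_Ioc fun x _ => ?_
        simp_rw [mul_assoc]
        rw [integral_const_mul]

end Aux

theorem T_split_lower (β γ : ℝ) (hβ : 0 < β) (hγ : 0 ≤ γ) (m n : ℕ)
    (u v : ℝ) (hu : u ∈ Set.Ioc (0:ℝ) 1) (hv : v ∈ Set.Ioc (0:ℝ) 1) :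
    (∫ u' in (0:ℝ)..1, T β γ m u u' * exp (-β/(2*u'))) *
        (∫ w in (0:ℝ)..1, exp (-(β + 2*γ)/w)) *
        (∫ v' in (0:ℝ)..1, exp (-β/(2*v')) * T β γ n v' v)
      ≤ T β γ (m + 3 + n) u v := by
  rw [intervalIntegral.integral_of_le zero_le_one,
    intervalIntegral.integral_of_le zero_le_one,
    intervalIntegral.integral_of_le zero_le_one]
  have main : ∀ (k : ℕ), ∀ a ∈ Ioc (0:ℝ) 1,
      (∫ u' in Ioc (0:ℝ) 1, T β γ k a u' * exp (-β/(2*u'))) *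
        (∫ w in Ioc (0:ℝ) 1, exp (-(β + 2*γ)/w)) *
        (∫ v' in Ioc (0:ℝ) 1, exp (-β/(2*v')) * T β γ n v' v)
      ≤ T β γ (k + 3 + n) a v := by
    intro k
    induction k with
    | zero =>
      intro a ha
      have h03 : 0 + 3 + n = n + 1 + 1 + 1 := by omega
      rw [h03, T_eq, mul_assoc, ← integral_mul_const]
      apply setIntegral_mono_on ?_ ?_ measurableSet_Ioc ?_
      · exact Integrable.mul_const (intA β γ hβ.le hγ 0 ha.1) _
      · exact intQT β γ hβ.le hγ (n+1+1) ha.1 hv.1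
      · intro u' hu'
        have hT0 : T β γ 0 a u' = Q β γ a u' := rfl
        have hs := step1 β γ hβ.le hγ n hv hu'
        have hQ := (Q_pos β γ a u').le
        calc T β γ 0 a u' * exp (-β/(2*u')) *
              ((∫ w in Ioc (0:ℝ) 1, exp (-(β + 2*γ)/w)) *
                ∫ v' in Ioc (0:ℝ) 1, exp (-β/(2*v')) * T β γ n v' v)
            = Q β γ a u' * (exp (-β/(2*u')) *
                (∫ w in Ioc (0:ℝ) 1, exp (-(β + 2*γ)/w)) *
                ∫ v' in Ioc (0:ℝ) 1, exp (-β/(2*v')) * T β γ n v' v) := by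
              rw [hT0]; ring
          _ ≤ Q β γ a u' * T β γ (n+1+1) u' v := mul_le_mul_of_nonneg_left hs hQ
    | succ k ih =>
      intro a ha
      have hs : k + 1 + 3 + n = (k + 3 + n) + 1 := by omega
      rw [hs, T_eq, A_succ β γ hβ.le hγ k ha.1, mul_assoc, ← integral_mul_const]
      apply setIntegral_mono_on ?_ ?_ measurableSet_Ioc ?_
      · apply Integrable.mul_const
        apply intOn ((Q_meas_left β γ a).mul (A_meas β γ k)) 1
        intro x hx
        have h1 := Q_le_one β γ hβ.le hγ ha.1 hx.1
        have h2 := A_le_one β γ hβ.le hγ k hx.1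
        have h3 := (Q_pos β γ a x).le
        have h4 := A_nonneg β γ k x
        simp only [Pi.mul_apply]
        rw [abs_of_nonneg (mul_nonneg h3 h4)]
        nlinarith
      · exact intQT β γ hβ.le hγ (k+3+n) ha.1 hv.1
      · intro x hx
        have hih := ih x hx
        have hQ := (Q_pos β γ a x).le
        calc Q β γ a x * (∫ u' in Ioc (0:ℝ) 1, T β γ k x u' * exp (-β/(2*u'))) *
              ((∫ w in Ioc (0:ℝ) 1, exp (-(β + 2*γ)/w)) *
                ∫ v' in Ioc (0:ℝ) 1, exp (-β/(2*v')) * T β γ n v' v)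
            = Q β γ a x * ((∫ u' in Ioc (0:ℝ) 1, T β γ k x u' * exp (-β/(2*u'))) *
                (∫ w in Ioc (0:ℝ) 1, exp (-(β + 2*γ)/w)) *
                ∫ v' in Ioc (0:ℝ) 1, exp (-β/(2*v')) * T β γ n v' v) := by ring
          _ ≤ Q β γ a x * T β γ (k+3+n) x v := mul_le_mul_of_nonneg_left hih hQ
  exact main m u hu
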